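/- Let A = {0,1}, let k be odd with k ≥ 1, and let n ≥ k+1. Both of the sequences γ^{n,k} and ρ^{n,k} are σ_k-Gray cycles over {0,1}^n. -/

import Mathlib

/-- Hamming distance between two words (lists) of the same length:
the number of positions in which they differ. -/
def hammingL {α : Type*} [DecidableEq α] (w w' : List α) : ℕ :=
  ((w.zip w').filter fun q => decide (q.1 ≠ q.2)).length

/-- `w` (restricted to indices `< N`) is a `σ_k`-Gray cycle over `X`:
its terms are pairwise distinct and enumerate `X` (a bijection from `[0, N-1]` onto `X`),
two consecutive terms have the same length and Hamming distance exactly `k`, and so do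
the first and the last term. -/
def IsGrayCycleOn {α : Type*} [DecidableEq α] (k N : ℕ) (w : ℕ → List α)
    (X : Set (List α)) : Prop :=
  Set.BijOn w (Set.Iio N) X ∧
  (∀ i, 1 ≤ i → i < N →
    (w (i - 1)).length = (w i).length ∧ hammingL (w (i - 1)) (w i) = k) ∧
  (0 < N → (w (N - 1)).length = (w 0).length ∧ hammingL (w (N - 1)) (w 0) = k)

/-- The bit complement `θ : 0 ↔ 1` on the binary alphabet `{0,1}`. -/
def cpl (x : Fin 2) : Fin 2 := x + 1

/-- The bit complement extended letterwise to binary words. -/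
def cplW (w : List (Fin 2)) : List (Fin 2) := w.map cpl

/-- The reflected binary Gray code `g^{m,1}` over words of length `m`:
`g^{0,1} = (ε)` and `g^{m+1,1} = (0·g^{m,1}, 1·(g^{m,1})^R)`. -/
def binGray : ℕ → List (List (Fin 2))
  | 0 => [[]]
  | m + 1 =>
      (binGray m).map (fun w => 0 :: w) ++ (binGray m).reverse.map (fun w => 1 :: w)

/-- The sequence `γ^{n0,1}`: `γ^{n0,1}_{[0]} = g^{n0,1}_{[0]}` and
`γ^{n0,1}_{[i]} = g^{n0,1}_{[2^{n0} - i]}` for `1 ≤ i ≤ 2^{n0} - 1`. -/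
def gamma1 (n0 i : ℕ) : List (Fin 2) :=
  if i = 0 then (binGray n0).getD 0 [] else (binGray n0).getD (2 ^ n0 - i) []

/-- The sequence `ρ^{n0,1}`: `ρ^{n0,1}_{[0]} = g^{n0,1}_{[2^{n0}-1]}` and
`ρ^{n0,1}_{[i]} = g^{n0,1}_{[i-1]}` for `1 ≤ i ≤ 2^{n0} - 1`. -/
def rho1 (n0 i : ℕ) : List (Fin 2) :=
  if i = 0 then (binGray n0).getD (2 ^ n0 - 1) [] else (binGray n0).getD (i - 1) []

/-- `grSeq n0 true t i` (resp. `grSeq n0 false t i`) is the term of index `i` of the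
sequence `γ^{n0+2t, 2t+1}` (resp. `ρ^{n0+2t, 2t+1}`), built inductively: the base cases
are `γ^{n0,1}` and `ρ^{n0,1}`, and, writing `i = q·2^m + r` with `m = n0 + 2t` and
`r < 2^m`, `γ^{m+2, (2t+1)+2}_{[i]}` is `θ^r(00)·γ^{m,2t+1}_{[r]}`, `θ^r(01)·ρ^{m,2t+1}_{[r]}`,
`θ^r(11)·γ^{m,2t+1}_{[r]}`, `θ^r(10)·ρ^{m,2t+1}_{[r]}` according to `q = 0, 1, 2, 3`, and
`ρ^{m+2, (2t+1)+2}_{[i]}` is `θ^r(10)·γ^{m,2t+1}_{[r]}`, `θ^r(11)·ρ^{m,2t+1}_{[r]}`,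
`θ^r(01)·γ^{m,2t+1}_{[r]}`, `θ^r(00)·ρ^{m,2t+1}_{[r]}` according to `q = 0, 1, 2, 3`. -/
def grSeq (n0 : ℕ) : Bool → ℕ → ℕ → List (Fin 2)
  | b, 0, i => if b then gamma1 n0 i else rho1 n0 i
  | b, t + 1, i =>
      cplW^[i % 2 ^ (n0 + 2 * t)]
        (if b then
          (if i / 2 ^ (n0 + 2 * t) = 0 then [0, 0]
           else if i / 2 ^ (n0 + 2 * t) = 1 then [0, 1]
           else if i / 2 ^ (n0 + 2 * t) = 2 then [1, 1] else [1, 0])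
         else
          (if i / 2 ^ (n0 + 2 * t) = 0 then [1, 0]
           else if i / 2 ^ (n0 + 2 * t) = 1 then [1, 1]
           else if i / 2 ^ (n0 + 2 * t) = 2 then [0, 1] else [0, 0])) ++
        grSeq n0 (i / 2 ^ (n0 + 2 * t) % 2 == 0) t (i % 2 ^ (n0 + 2 * t))

/-- For odd `k` and `n ≥ k + 1`, `gammaNK n k i` is the term `γ^{n,k}_{[i]}`
(here `n0 = n - k + 1` and `k = 2·(k/2) + 1`). -/
def gammaNK (n k i : ℕ) : List (Fin 2) := grSeq (n + 1 - k) true (k / 2) i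

/-- For odd `k` and `n ≥ k + 1`, `rhoNK n k i` is the term `ρ^{n,k}_{[i]}`. -/
def rhoNK (n k i : ℕ) : List (Fin 2) := grSeq (n + 1 - k) false (k / 2) i

/-!
The sequences `γ^{n,k}` and `ρ^{n,k}` are treated together, by induction on `k`, with one extra
invariant: the last word of each is at distance `k + 1` from the first word of the other. In the
step to `(n + 2, k + 2)` the `4 · 2^n` words form four blocks. Inside a block the two-letter prefix
is complemented (distance `2`) while the suffix moves one step along `γ^{n,k}` or `ρ^{n,k}`
(distance `k`); from one block to the next the prefix changes in one letter while the suffix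
crosses from the end of `γ` to the start of `ρ` or back (distance `k + 1`). For `k = 1` the
extra invariant comes from the reflection symmetry of the reflected binary Gray code. Finally,
an injective sequence of `2^n` words of length `n` enumerates all of them.
-/
section Hamming
variable {α : Type*} [DecidableEq α]

lemma hammingL_cons (a b : α) (w w' : List α) :
    hammingL (a :: w) (b :: w') = hammingL w w' + if a = b then 0 else 1 := by
  by_cases h : a = b <;> simp [hammingL, h]

lemma hammingL_comm (w w' : List α) : hammingL w w' = hammingL w' w := by
  rw [hammingL, hammingL, ← List.zip_swap w w', List.filter_map, List.length_map]
  simp only [Function.comp_def, Prod.fst_swap, Prod.snd_swap, ne_comm]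

lemma hammingL_self (w : List α) : hammingL w w = 0 := by
  induction w with
  | nil => rfl
  | cons a w ih => simp [hammingL_cons, ih]

lemma hammingL_append {w w' : List α} (u u' : List α) (h : w.length = w'.length) :
    hammingL (w ++ u) (w' ++ u') = hammingL w w' + hammingL u u' := by
  simp [hammingL, List.zip_append h]

lemma hammingL_map_right_self {f : α → α} (hf : ∀ a, f a ≠ a) (w : List α) :
    hammingL w (w.map f) = w.length := by
  induction w with
  | nil => rfl
  | cons a w ih => simp [hammingL_cons, ih, (hf a).symm]

end Hamming

lemma cpl_involutive : Function.Involutive cpl := by intro a; revert a; decide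

lemma cpl_ne (a : Fin 2) : cpl a ≠ a := by revert a; decide

lemma cplW_involutive : Function.Involutive cplW := fun w => by
  simp [cplW, cpl_involutive.comp_self]

lemma length_cplW_iterate (r : ℕ) (w : List (Fin 2)) : (cplW^[r] w).length = w.length := by
  rcases Nat.even_or_odd r with hr | hr
  · rw [cplW_involutive.iterate_even hr, id]
  · rw [cplW_involutive.iterate_odd hr, cplW, List.length_map]

lemma hammingL_cplW_right_self (w : List (Fin 2)) : hammingL w (cplW w) = w.length :=
  hammingL_map_right_self cpl_ne w

def grayWord (m i : ℕ) : List (Fin 2) := (binGray m).getD i []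

lemma length_binGray (m : ℕ) : (binGray m).length = 2 ^ m := by
  induction m with
  | zero => rfl
  | succ m ih => simp [binGray, ih, pow_succ, mul_two]

lemma length_of_mem_binGray {m : ℕ} {w : List (Fin 2)} (h : w ∈ binGray m) : w.length = m := by
  induction m generalizing w with
  | zero => simp_all [binGray]
  | succ m ih =>
    simp only [binGray, List.mem_append, List.mem_map, List.mem_reverse] at h
    rcases h with ⟨u, hu, rfl⟩ | ⟨u, hu, rfl⟩ <;> simp [ih hu]

lemma nodup_binGray (m : ℕ) : (binGray m).Nodup := by
  induction m with
  | zero => simp [binGray]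
  | succ m ih =>
    refine List.Nodup.append (ih.map fun _ _ h => List.cons_injective h)
      ((List.nodup_reverse.mpr ih).map fun _ _ h => List.cons_injective h) ?_
    simp [List.disjoint_left]

lemma grayWord_eq_getElem {m i : ℕ} (h : i < 2 ^ m) :
    grayWord m i = (binGray m)[i]'(by rwa [length_binGray]) :=
  List.getD_eq_getElem _ _ _

lemma length_grayWord {m i : ℕ} (h : i < 2 ^ m) : (grayWord m i).length = m := by
  rw [grayWord_eq_getElem h]
  exact length_of_mem_binGray (List.getElem_mem _)

lemma grayWord_injOn (m : ℕ) : Set.InjOn (grayWord m) (Set.Iio (2 ^ m)) := by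
  intro i hi j hj h
  rw [grayWord_eq_getElem hi, grayWord_eq_getElem hj] at h
  exact (nodup_binGray m).getElem_inj_iff.mp h

lemma grayWord_succ_of_lt {m i : ℕ} (h : i < 2 ^ m) : grayWord (m + 1) i = 0 :: grayWord m i := by
  rw [grayWord_eq_getElem (by rw [pow_succ]; omega), grayWord_eq_getElem h]
  simp [binGray, List.getElem_append_left, length_binGray, h]

lemma grayWord_succ_reflect {m j : ℕ} (h : j < 2 ^ m) :
    grayWord (m + 1) (2 ^ (m + 1) - 1 - j) = 1 :: grayWord m j := by
  rw [grayWord_eq_getElem (by omega), grayWord_eq_getElem h]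
  simp only [binGray]
  rw [List.getElem_append_right (by simp [length_binGray, pow_succ]; omega)]
  simp only [List.getElem_map, List.getElem_reverse, List.length_map, length_binGray]
  congr 2
  rw [pow_succ]; omega

lemma hammingL_grayWord_succ {m i : ℕ} (h : i + 1 < 2 ^ m) :
    hammingL (grayWord m i) (grayWord m (i + 1)) = 1 := by
  induction m generalizing i with
  | zero => simp at h
  | succ m ih =>
    rcases lt_trichotomy (i + 1) (2 ^ m) with hi | hi | hi
    · rw [grayWord_succ_of_lt (by omega), grayWord_succ_of_lt hi, hammingL_cons, ih hi]
      simp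
    · have hrefl : i + 1 = 2 ^ (m + 1) - 1 - i := by rw [pow_succ]; omega
      rw [grayWord_succ_of_lt (by omega), hrefl, grayWord_succ_reflect (by omega),
        hammingL_cons, hammingL_self]
      simp
    · obtain ⟨j, hj, rfl⟩ : ∃ j, j + 1 < 2 ^ m ∧ i = 2 ^ (m + 1) - 1 - (j + 1) :=
        ⟨2 ^ (m + 1) - 2 - i, by rw [pow_succ] at h ⊢; omega, by omega⟩
      rw [show 2 ^ (m + 1) - 1 - (j + 1) + 1 = 2 ^ (m + 1) - 1 - j by omega,
        grayWord_succ_reflect hj, grayWord_succ_reflect (by omega), hammingL_cons, hammingL_comm,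
        ih hj]
      simp

lemma hammingL_grayWord_succ_reflect {m i j : ℕ} (hi : i < 2 ^ m) (hj : j < 2 ^ m) :
    hammingL (grayWord (m + 1) i) (grayWord (m + 1) (2 ^ (m + 1) - 1 - j)) =
      hammingL (grayWord m i) (grayWord m j) + 1 := by
  rw [grayWord_succ_of_lt hi, grayWord_succ_reflect hj, hammingL_cons]
  simp

lemma hammingL_grayWord_last_zero (m : ℕ) :
    hammingL (grayWord (m + 1) (2 ^ (m + 1) - 1)) (grayWord (m + 1) 0) = 1 := by
  have h := hammingL_grayWord_succ_reflect (m := m) (i := 0) (j := 0) (by positivity)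
    (by positivity)
  rwa [hammingL_self, Nat.sub_zero, hammingL_comm] at h

lemma gamma1_eq (m i : ℕ) :
    gamma1 m i = if i = 0 then grayWord m 0 else grayWord m (2 ^ m - i) := rfl

lemma rho1_eq (m i : ℕ) :
    rho1 m i = if i = 0 then grayWord m (2 ^ m - 1) else grayWord m (i - 1) := rfl

lemma length_gamma1 {m i : ℕ} (hi : i < 2 ^ m) : (gamma1 m i).length = m := by
  rw [gamma1_eq]; split_ifs <;> exact length_grayWord (by omega)

lemma length_rho1 {m i : ℕ} (hi : i < 2 ^ m) : (rho1 m i).length = m := by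
  rw [rho1_eq]; split_ifs <;> exact length_grayWord (by omega)

lemma gamma1_injOn (m : ℕ) : Set.InjOn (gamma1 m) (Set.Iio (2 ^ m)) := by
  intro i (hi : i < 2 ^ m) j (hj : j < 2 ^ m) h
  simp only [gamma1_eq] at h
  split_ifs at h <;>
    have := grayWord_injOn m (Set.mem_Iio.mpr (by omega)) (Set.mem_Iio.mpr (by omega)) h <;>
    omega

lemma rho1_injOn (m : ℕ) : Set.InjOn (rho1 m) (Set.Iio (2 ^ m)) := by
  intro i (hi : i < 2 ^ m) j (hj : j < 2 ^ m) h
  simp only [rho1_eq] at h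
  split_ifs at h <;>
    have := grayWord_injOn m (Set.mem_Iio.mpr (by omega)) (Set.mem_Iio.mpr (by omega)) h <;>
    omega

lemma hammingL_gamma1_succ {m i : ℕ} (hm : 1 ≤ m) (hi : i < 2 ^ m) :
    hammingL (gamma1 m i) (gamma1 m ((i + 1) % 2 ^ m)) = 1 := by
  obtain ⟨p, rfl⟩ : ∃ p, m = p + 1 := ⟨m - 1, by omega⟩
  simp only [gamma1_eq]
  rcases (show i + 1 = 2 ^ (p + 1) ∨ i = 0 ∨ (0 < i ∧ i + 1 < 2 ^ (p + 1)) by omega)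
    with h | rfl | ⟨h0, h⟩
  · rw [h, Nat.mod_self, if_neg (by omega), if_pos rfl, hammingL_comm,
      show 2 ^ (p + 1) - i = 0 + 1 by omega]
    exact hammingL_grayWord_succ (by omega)
  · rw [Nat.mod_eq_of_lt (by omega), if_pos rfl, if_neg (by omega), zero_add, hammingL_comm]
    exact hammingL_grayWord_last_zero p
  · rw [Nat.mod_eq_of_lt h, if_neg (by omega), if_neg (by omega), hammingL_comm,
      show 2 ^ (p + 1) - i = 2 ^ (p + 1) - (i + 1) + 1 by omega]
    exact hammingL_grayWord_succ (by omega)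

lemma hammingL_rho1_succ {m i : ℕ} (hm : 1 ≤ m) (hi : i < 2 ^ m) :
    hammingL (rho1 m i) (rho1 m ((i + 1) % 2 ^ m)) = 1 := by
  obtain ⟨p, rfl⟩ : ∃ p, m = p + 1 := ⟨m - 1, by omega⟩
  simp only [rho1_eq]
  rcases (show i + 1 = 2 ^ (p + 1) ∨ i = 0 ∨ (0 < i ∧ i + 1 < 2 ^ (p + 1)) by omega)
    with h | rfl | ⟨h0, h⟩
  · rw [h, Nat.mod_self, if_neg (by omega), if_pos rfl, show 2 ^ (p + 1) - 1 = i - 1 + 1 by omega]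
    exact hammingL_grayWord_succ (by omega)
  · rw [Nat.mod_eq_of_lt (by omega), if_pos rfl, if_neg (by omega), Nat.add_sub_cancel]
    exact hammingL_grayWord_last_zero p
  · rw [Nat.mod_eq_of_lt h, if_neg (by omega), if_neg (by omega), show i = i - 1 + 1 by omega]
    exact hammingL_grayWord_succ (by omega)

lemma hammingL_gamma1_last_rho1_zero {m : ℕ} (hm : 2 ≤ m) :
    hammingL (gamma1 m (2 ^ m - 1)) (rho1 m 0) = 2 := by
  obtain ⟨p, rfl⟩ : ∃ p, m = p + 1 := ⟨m - 1, by omega⟩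
  have hp : 1 < 2 ^ p := Nat.one_lt_two_pow (by omega)
  have h := hammingL_grayWord_succ_reflect (i := 1) (j := 0) hp (by omega)
  rw [Nat.sub_zero, hammingL_comm (grayWord p 1), hammingL_grayWord_succ hp] at h
  rwa [gamma1_eq, rho1_eq, if_neg (by omega), if_pos rfl,
    show 2 ^ (p + 1) - (2 ^ (p + 1) - 1) = 1 by omega]

lemma hammingL_rho1_last_gamma1_zero {m : ℕ} (hm : 2 ≤ m) :
    hammingL (rho1 m (2 ^ m - 1)) (gamma1 m 0) = 2 := by
  obtain ⟨p, rfl⟩ : ∃ p, m = p + 1 := ⟨m - 1, by omega⟩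
  have hp : 1 < 2 ^ p := Nat.one_lt_two_pow (by omega)
  have h := hammingL_grayWord_succ_reflect (i := 0) (j := 1) (by omega) hp
  rw [hammingL_grayWord_succ hp, hammingL_comm] at h
  rwa [gamma1_eq, rho1_eq, if_neg (by omega), if_pos rfl]

/-- `s true` and `s false` play the roles of `γ^{n,k}` and `ρ^{n,k}`. -/
structure IsGrayPair (k n : ℕ) (s : Bool → ℕ → List (Fin 2)) : Prop where
  length_eq : ∀ b, ∀ i < 2 ^ n, (s b i).length = n
  injOn : ∀ b, Set.InjOn (s b) (Set.Iio (2 ^ n))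
  hammingL_succ : ∀ b, ∀ i < 2 ^ n, hammingL (s b i) (s b ((i + 1) % 2 ^ n)) = k
  hammingL_last_zero : ∀ b, hammingL (s b (2 ^ n - 1)) (s (!b) 0) = k + 1

lemma isGrayPair_grSeq_zero {m : ℕ} (hm : 2 ≤ m) : IsGrayPair 1 m (fun b => grSeq m b 0) where
  length_eq b _ hi := by cases b; exacts [length_rho1 hi, length_gamma1 hi]
  injOn b := by cases b; exacts [rho1_injOn m, gamma1_injOn m]
  hammingL_succ b _ hi := by
    cases b; exacts [hammingL_rho1_succ (by omega) hi, hammingL_gamma1_succ (by omega) hi]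
  hammingL_last_zero b := by
    cases b; exacts [hammingL_rho1_last_gamma1_zero hm, hammingL_gamma1_last_rho1_zero hm]

def blockPrefix (b : Bool) (q : ℕ) : List (Fin 2) :=
  if b then
    (if q = 0 then [0, 0] else if q = 1 then [0, 1] else if q = 2 then [1, 1] else [1, 0])
  else
    (if q = 0 then [1, 0] else if q = 1 then [1, 1] else if q = 2 then [0, 1] else [0, 0])

lemma length_blockPrefix (b : Bool) (q : ℕ) : (blockPrefix b q).length = 2 := by
  unfold blockPrefix; split_ifs <;> rfl

lemma length_cplW_iterate_blockPrefix (b : Bool) (q r : ℕ) :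
    (cplW^[r] (blockPrefix b q)).length = 2 := by
  rw [length_cplW_iterate, length_blockPrefix]

lemma hammingL_cplW_blockPrefix_succ (b : Bool) {q : ℕ} (hq : q < 4) :
    hammingL (cplW (blockPrefix b q)) (blockPrefix b ((q + 1) % 4)) = 1 := by
  cases b <;> interval_cases q <;> decide

lemma hammingL_cplW_blockPrefix_three (b : Bool) :
    hammingL (cplW (blockPrefix b 3)) (blockPrefix (!b) 0) = 2 := by
  cases b <;> decide

lemma mod_two_eq_of_cplW_iterate_blockPrefix_eq {b : Bool} {q q' r r' : ℕ} (hq : q < 4)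
    (hq' : q' < 4) (h : cplW^[r] (blockPrefix b q) = cplW^[r'] (blockPrefix b q')) :
    q % 2 = q' % 2 := by
  rcases Nat.even_or_odd r with hr | hr <;> rcases Nat.even_or_odd r' with hr' | hr' <;>
    simp only [cplW_involutive.iterate_even, cplW_involutive.iterate_odd, hr, hr', id] at h <;>
    cases b <;> interval_cases q <;> interval_cases q' <;> revert h <;> decide

lemma blockPrefix_injOn (b : Bool) : Set.InjOn (blockPrefix b) (Set.Iio 4) := by
  intro q (hq : q < 4) q' (hq' : q' < 4) h
  cases b <;> interval_cases q <;> interval_cases q' <;> revert h <;> decide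

lemma grSeq_succ_mul_add (n0 : ℕ) (b : Bool) (t q : ℕ) {r : ℕ} (hr : r < 2 ^ (n0 + 2 * t)) :
    grSeq n0 b (t + 1) (q * 2 ^ (n0 + 2 * t) + r) =
      cplW^[r] (blockPrefix b q) ++ grSeq n0 (q % 2 == 0) t r := by
  have hpos : 0 < 2 ^ (n0 + 2 * t) := by positivity
  have hdiv : (q * 2 ^ (n0 + 2 * t) + r) / 2 ^ (n0 + 2 * t) = q := by
    rw [add_comm, Nat.add_mul_div_right _ _ hpos, Nat.div_eq_of_lt hr, zero_add]
  have hmod : (q * 2 ^ (n0 + 2 * t) + r) % 2 ^ (n0 + 2 * t) = r := by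
    rw [add_comm, Nat.add_mul_mod_self_right, Nat.mod_eq_of_lt hr]
  rw [grSeq, hdiv, hmod]
  cases b <;> rfl

def IsDoubling (n : ℕ) (s s' : Bool → ℕ → List (Fin 2)) : Prop :=
  ∀ b q r, r < 2 ^ n → s' b (q * 2 ^ n + r) = cplW^[r] (blockPrefix b q) ++ s (q % 2 == 0) r

lemma exists_lt_four_mul_add {M i : ℕ} (h : i < 4 * M) : ∃ q < 4, ∃ r < M, i = q * M + r :=
  ⟨i / M, Nat.div_lt_of_lt_mul (by rwa [mul_comm]), i % M, Nat.mod_lt _ (by omega),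
    (Nat.div_add_mod' i M).symm⟩

lemma odd_two_pow_sub_one {n : ℕ} (hn : n ≠ 0) : Odd (2 ^ n - 1) :=
  Nat.Even.sub_odd Nat.one_le_two_pow ((Nat.even_pow' hn).mpr even_two) odd_one

namespace IsDoubling

variable {k n : ℕ} {s s' : Bool → ℕ → List (Fin 2)}

lemma length_eq (hd : IsDoubling n s s') (h : IsGrayPair k n s) (b : Bool) {i : ℕ}
    (hi : i < 2 ^ (n + 2)) : (s' b i).length = n + 2 := by
  rw [show 2 ^ (n + 2) = 4 * 2 ^ n by ring] at hi
  obtain ⟨q, -, r, hr, rfl⟩ := exists_lt_four_mul_add hi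
  rw [hd b q r hr, List.length_append, length_cplW_iterate_blockPrefix, h.length_eq _ r hr]
  omega

lemma injOn (hd : IsDoubling n s s') (h : IsGrayPair k n s) (b : Bool) :
    Set.InjOn (s' b) (Set.Iio (2 ^ (n + 2))) := by
  intro i (hi : i < 2 ^ (n + 2)) j (hj : j < 2 ^ (n + 2)) hij
  rw [show 2 ^ (n + 2) = 4 * 2 ^ n by ring] at hi hj
  obtain ⟨q, hq, r, hr, rfl⟩ := exists_lt_four_mul_add hi
  obtain ⟨q', hq', r', hr', rfl⟩ := exists_lt_four_mul_add hj
  rw [hd b q r hr, hd b q' r' hr'] at hij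
  obtain ⟨hpre, hsuf⟩ := List.append_inj hij (by simp only [length_cplW_iterate_blockPrefix])
  rw [mod_two_eq_of_cplW_iterate_blockPrefix_eq hq hq' hpre] at hsuf
  obtain rfl : r = r' := h.injOn _ hr hr' hsuf
  obtain rfl : q = q' := blockPrefix_injOn b hq hq' (cplW_involutive.injective.iterate r hpre)
  rfl

lemma hammingL_succ (hn : n ≠ 0) (hd : IsDoubling n s s') (h : IsGrayPair k n s) (b : Bool)
    {i : ℕ} (hi : i < 2 ^ (n + 2)) :
    hammingL (s' b i) (s' b ((i + 1) % 2 ^ (n + 2))) = k + 2 := by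
  rw [show 2 ^ (n + 2) = 4 * 2 ^ n by ring] at hi ⊢
  obtain ⟨q, hq, r, hr, rfl⟩ := exists_lt_four_mul_add hi
  rcases (show r + 1 < 2 ^ n ∨ r + 1 = 2 ^ n by omega) with hr1 | hr1
  · have hqM : q * 2 ^ n ≤ 3 * 2 ^ n := Nat.mul_le_mul_right _ (by omega)
    rw [Nat.mod_eq_of_lt (by omega), add_assoc, hd b q r hr, hd b q (r + 1) hr1,
      hammingL_append _ _ (by simp only [length_cplW_iterate_blockPrefix]),
      Function.iterate_succ_apply', hammingL_cplW_right_self, length_cplW_iterate_blockPrefix,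
      ← Nat.mod_eq_of_lt hr1, h.hammingL_succ _ r hr]
    omega
  · obtain rfl : r = 2 ^ n - 1 := by omega
    have hnext : ((q + 1) % 4 % 2 == 0) = !(q % 2 == 0) := by interval_cases q <;> rfl
    have hd0 := hd b ((q + 1) % 4) 0 (by positivity)
    rw [add_zero] at hd0
    rw [add_assoc, hr1, ← Nat.succ_mul, Nat.mul_mod_mul_right, hd0, hd b q _ hr,
      hammingL_append _ _ (by simp only [length_cplW_iterate_blockPrefix]),
      cplW_involutive.iterate_odd (odd_two_pow_sub_one hn), Function.iterate_zero_apply,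
      hammingL_cplW_blockPrefix_succ b hq, hnext, h.hammingL_last_zero]
    omega

lemma hammingL_last_zero (hn : n ≠ 0) (hd : IsDoubling n s s') (h : IsGrayPair k n s)
    (b : Bool) : hammingL (s' b (2 ^ (n + 2) - 1)) (s' (!b) 0) = k + 2 + 1 := by
  have hd0 := hd (!b) 0 0 (by positivity)
  rw [zero_mul, zero_add] at hd0
  have hpos : 0 < 2 ^ n := by positivity
  rw [show 2 ^ (n + 2) - 1 = 3 * 2 ^ n + (2 ^ n - 1) by rw [pow_add]; omega, hd0,
    hd b 3 _ (by omega), hammingL_append _ _ (by simp only [length_cplW_iterate_blockPrefix]),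
    cplW_involutive.iterate_odd (odd_two_pow_sub_one hn), Function.iterate_zero_apply,
    hammingL_cplW_blockPrefix_three]
  have hlast : hammingL (s (3 % 2 == 0) (2 ^ n - 1)) (s (0 % 2 == 0) 0) = k + 1 :=
    h.hammingL_last_zero false
  omega

theorem isGrayPair (hn : n ≠ 0) (hd : IsDoubling n s s') (h : IsGrayPair k n s) :
    IsGrayPair (k + 2) (n + 2) s' where
  length_eq b _ := hd.length_eq h b
  injOn := hd.injOn h
  hammingL_succ b _ := hd.hammingL_succ hn h b
  hammingL_last_zero := hd.hammingL_last_zero hn h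

end IsDoubling

theorem isGrayPair_grSeq {n0 : ℕ} (hn0 : 2 ≤ n0) (t : ℕ) :
    IsGrayPair (2 * t + 1) (n0 + 2 * t) (fun b => grSeq n0 b t) := by
  induction t with
  | zero => exact isGrayPair_grSeq_zero hn0
  | succ t ih =>
    exact IsDoubling.isGrayPair (n := n0 + 2 * t) (by omega)
      (fun b q _ hr => grSeq_succ_mul_add n0 b t q hr) ih

lemma ncard_setOf_length_eq (α : Type*) [Fintype α] (n : ℕ) :
    {u : List α | u.length = n}.ncard = Fintype.card α ^ n := by
  rw [← Nat.card_coe_set_eq, ← card_vector n, ← Nat.card_eq_fintype_card]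
  rfl

lemma isGrayCycleOn_of_injOn {α : Type*} [DecidableEq α] [Fintype α] {k n N : ℕ}
    {w : ℕ → List α} (hN : Fintype.card α ^ n = N) (hlen : ∀ i < N, (w i).length = n)
    (hinj : Set.InjOn w (Set.Iio N)) (hadj : ∀ i < N, hammingL (w i) (w ((i + 1) % N)) = k) :
    IsGrayCycleOn k N w {u | u.length = n} := by
  have hmaps : Set.MapsTo w (Set.Iio N) {u | u.length = n} := fun i hi => hlen i hi
  refine ⟨⟨hmaps, hinj, ?_⟩, fun i h1 hi => ⟨?_, ?_⟩, fun hN0 => ⟨?_, ?_⟩⟩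
  · refine (Set.eq_of_subset_of_ncard_le hmaps.image_subset ?_ (List.finite_length_eq α n)).ge
    rw [hinj.ncard_image, Set.ncard_Iio_nat, ncard_setOf_length_eq, hN]
  · rw [hlen _ (by omega), hlen _ hi]
  · simpa [Nat.sub_add_cancel h1, Nat.mod_eq_of_lt hi] using hadj (i - 1) (by omega)
  · rw [hlen _ (by omega), hlen _ hN0]
  · simpa [Nat.sub_add_cancel hN0] using hadj (N - 1) (by omega)

theorem IsGrayPair.isGrayCycleOn {k n : ℕ} {s : Bool → ℕ → List (Fin 2)}
    (h : IsGrayPair k n s) (b : Bool) : IsGrayCycleOn k (2 ^ n) (s b) {u | u.length = n} :=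
  isGrayCycleOn_of_injOn (Fintype.card_fin 2 ▸ rfl) (h.length_eq b) (h.injOn b)
    (h.hammingL_succ b)

theorem statement7_general (n k : ℕ) (hk : Odd k) (hn : k + 1 ≤ n) :
    IsGrayCycleOn k (2 ^ n) (gammaNK n k) {w : List (Fin 2) | w.length = n} ∧
    IsGrayCycleOn k (2 ^ n) (rhoNK n k) {w : List (Fin 2) | w.length = n} := by
  obtain ⟨t, rfl⟩ := hk
  obtain ⟨n0, rfl⟩ : ∃ n0, n = n0 + 2 * t := ⟨n - 2 * t, by omega⟩
  have h := isGrayPair_grSeq (n0 := n0) (by omega) t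
  have hn0 : n0 + 2 * t + 1 - (2 * t + 1) = n0 := by omega
  have ht : (2 * t + 1) / 2 = t := by omega
  unfold gammaNK rhoNK
  simp only [hn0, ht]
  exact ⟨h.isGrayCycleOn true, h.isGrayCycleOn false⟩

/-- For `k` odd with `k ≥ 1` and `n ≥ k + 1`, both `γ^{n,k}` and `ρ^{n,k}` are
`σ_k`-Gray cycles over `{0,1}^n`. -/
theorem statement7 (n k : ℕ) (hk1 : 1 ≤ k) (hk : Odd k) (hn : k + 1 ≤ n) :
    IsGrayCycleOn k (2 ^ n) (gammaNK n k) {w : List (Fin 2) | w.length = n} ∧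
    IsGrayCycleOn k (2 ^ n) (rhoNK n k) {w : List (Fin 2) | w.length = n} :=
  statement7_general n k hk hn
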